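/- Let I_0(t) = 1 − sqrt(πt) e^t erfc(sqrt(t)) and Q_1(t) := 2t I_0(t). Then for every c ∈ ℝ, q(t) = (c e^{−t}/√t) Q_1(t) solves q''' + q'' − (1/(2t)) q' + 3/(4t²) q' + (1/(2t²) − 3/(4t³)) q = 0, the linearization of equation (14.2) with the nonlinear terms dropped. -/

import Mathlib

open Set

/-- The complementary error function. -/
noncomputable def erfc (x : ℝ) : ℝ :=
  (2 / Real.sqrt Real.pi) * ∫ u in Set.Ioi x, Real.exp (-u ^ 2)

/-- `I₀(t) = 1 - √(πt) eᵗ erfc(√t)`. -/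
noncomputable def I₀ (t : ℝ) : ℝ :=
  1 - Real.sqrt (Real.pi * t) * Real.exp t * erfc (Real.sqrt t)

lemma gaussInt_hasDerivAt (x : ℝ) :
    HasDerivAt (fun y : ℝ => ∫ u in Ioi y, Real.exp (-u ^ 2)) (-Real.exp (-x ^ 2)) x := by
  have hint : MeasureTheory.Integrable (fun u : ℝ => Real.exp (-u ^ 2)) := by
    simpa using integrable_exp_neg_mul_sq (b := 1) one_pos
  have hcont : Continuous (fun u : ℝ => Real.exp (-u ^ 2)) := by continuity
  have key : (fun y : ℝ => ∫ u in Ioi y, Real.exp (-u ^ 2)) =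
      fun y => ((∫ u : ℝ, Real.exp (-u ^ 2)) - (∫ u in Iic (0:ℝ), Real.exp (-u ^ 2)))
        - ∫ u in (0:ℝ)..y, Real.exp (-u ^ 2) := by
    funext y
    have h1 : (∫ u in Iic y, Real.exp (-u ^ 2)) + ∫ u in Ioi y, Real.exp (-u ^ 2)
        = ∫ u : ℝ, Real.exp (-u ^ 2) :=
      intervalIntegral.integral_Iic_add_Ioi hint.integrableOn hint.integrableOn
    have h2 : (∫ u in Iic y, Real.exp (-u ^ 2)) - ∫ u in Iic (0:ℝ), Real.exp (-u ^ 2)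
        = ∫ u in (0:ℝ)..y, Real.exp (-u ^ 2) :=
      intervalIntegral.integral_Iic_sub_Iic hint.integrableOn hint.integrableOn
    linarith
  rw [key]
  have hd : HasDerivAt (fun y : ℝ => ∫ u in (0:ℝ)..y, Real.exp (-u ^ 2))
      (Real.exp (-x ^ 2)) x :=
    intervalIntegral.integral_hasDerivAt_right (hint.intervalIntegrable)
      (hcont.stronglyMeasurable.stronglyMeasurableAtFilter) hcont.continuousAt
  have h := (hasDerivAt_const x ((∫ u : ℝ, Real.exp (-u ^ 2)) - (∫ u in Iic (0:ℝ), Real.exp (-u ^ 2)))).sub hd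
  rw [zero_sub] at h
  exact h

lemma erfc_hasDerivAt (x : ℝ) :
    HasDerivAt erfc (2 / Real.sqrt Real.pi * -Real.exp (-x ^ 2)) x := by
  unfold erfc
  exact (gaussInt_hasDerivAt x).const_mul _

noncomputable def F₀ : ℝ → ℝ := fun s =>
  Real.sqrt s * Real.exp (-s) - Real.sqrt Real.pi * (s * erfc (Real.sqrt s))

noncomputable def G₁ : ℝ → ℝ := fun s =>
  Real.exp (-s) / (2 * Real.sqrt s) - Real.sqrt Real.pi * erfc (Real.sqrt s)

noncomputable def G₂ : ℝ → ℝ := fun s =>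
  Real.exp (-s) * (1 / (2 * Real.sqrt s) - 1 / (4 * (s * Real.sqrt s)))

noncomputable def G₃ : ℝ → ℝ := fun s =>
  Real.exp (-s) * (3 / (8 * (s ^ 2 * Real.sqrt s)) - 1 / (2 * Real.sqrt s))

lemma sqrtpi_ne : Real.sqrt Real.pi ≠ 0 :=
  (Real.sqrt_pos.mpr Real.pi_pos).ne'

lemma erfc_sqrt_hasDerivAt {s : ℝ} (hs : 0 < s) :
    HasDerivAt (fun x => erfc (Real.sqrt x))
      (2 / Real.sqrt Real.pi * -Real.exp (-s) * (1 / (2 * Real.sqrt s))) s := by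
  have h := (erfc_hasDerivAt (Real.sqrt s)).comp s (Real.hasDerivAt_sqrt hs.ne')
  rw [Real.sq_sqrt hs.le] at h
  exact h

lemma exp_neg_hasDerivAt (s : ℝ) :
    HasDerivAt (fun x : ℝ => Real.exp (-x)) (-Real.exp (-s)) s := by
  simpa using (hasDerivAt_neg s).exp

lemma hF {s : ℝ} (hs : 0 < s) : HasDerivAt F₀ (G₁ s) s := by
  have hsq := Real.hasDerivAt_sqrt hs.ne'
  have h1 : HasDerivAt (fun x => Real.sqrt x * Real.exp (-x))
      (1 / (2 * Real.sqrt s) * Real.exp (-s) + Real.sqrt s * -Real.exp (-s)) s :=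
    hsq.mul (exp_neg_hasDerivAt s)
  have h2 : HasDerivAt (fun x => Real.sqrt Real.pi * (x * erfc (Real.sqrt x)))
      (Real.sqrt Real.pi * (1 * erfc (Real.sqrt s) +
        s * (2 / Real.sqrt Real.pi * -Real.exp (-s) * (1 / (2 * Real.sqrt s))))) s :=
    ((hasDerivAt_id s).mul (erfc_sqrt_hasDerivAt hs)).const_mul _
  have h := h1.sub h2
  refine h.congr_deriv ?_
  have hu0 : 0 < Real.sqrt s := Real.sqrt_pos.mpr hs
  have hu2 : Real.sqrt s ^ 2 = s := Real.sq_sqrt hs.le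
  unfold G₁
  generalize Real.sqrt s = u at hu0 hu2 ⊢
  subst hu2
  field_simp
  ring

lemma hG₁ {s : ℝ} (hs : 0 < s) : HasDerivAt G₁ (G₂ s) s := by
  have hu0 : 0 < Real.sqrt s := Real.sqrt_pos.mpr hs
  have hden : HasDerivAt (fun x => 2 * Real.sqrt x) (2 * (1 / (2 * Real.sqrt s))) s :=
    (Real.hasDerivAt_sqrt hs.ne').const_mul 2
  have h1 : HasDerivAt (fun x => Real.exp (-x) / (2 * Real.sqrt x))
      ((-Real.exp (-s) * (2 * Real.sqrt s) - Real.exp (-s) * (2 * (1 / (2 * Real.sqrt s)))) /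
        (2 * Real.sqrt s) ^ 2) s :=
    (exp_neg_hasDerivAt s).div hden (by positivity)
  have h2 : HasDerivAt (fun x => Real.sqrt Real.pi * erfc (Real.sqrt x))
      (Real.sqrt Real.pi * (2 / Real.sqrt Real.pi * -Real.exp (-s) * (1 / (2 * Real.sqrt s)))) s :=
    (erfc_sqrt_hasDerivAt hs).const_mul _
  have h := h1.sub h2
  refine h.congr_deriv ?_
  have hu2 : Real.sqrt s ^ 2 = s := Real.sq_sqrt hs.le
  unfold G₂
  generalize Real.sqrt s = u at hu0 hu2 ⊢
  subst hu2
  field_simp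
  ring

lemma hG₂ {s : ℝ} (hs : 0 < s) : HasDerivAt G₂ (G₃ s) s := by
  have hu0 : 0 < Real.sqrt s := Real.sqrt_pos.mpr hs
  have hd1 : HasDerivAt (fun x => 2 * Real.sqrt x) (2 * (1 / (2 * Real.sqrt s))) s :=
    (Real.hasDerivAt_sqrt hs.ne').const_mul 2
  have hd2 : HasDerivAt (fun x => 4 * (x * Real.sqrt x))
      (4 * (1 * Real.sqrt s + s * (1 / (2 * Real.sqrt s)))) s :=
    ((hasDerivAt_id s).mul (Real.hasDerivAt_sqrt hs.ne')).const_mul 4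
  have h1 : HasDerivAt (fun x : ℝ => 1 / (2 * Real.sqrt x))
      ((0 * (2 * Real.sqrt s) - 1 * (2 * (1 / (2 * Real.sqrt s)))) / (2 * Real.sqrt s) ^ 2) s :=
    (hasDerivAt_const s 1).div hd1 (by positivity)
  have h2 : HasDerivAt (fun x : ℝ => 1 / (4 * (x * Real.sqrt x)))
      ((0 * (4 * (s * Real.sqrt s)) - 1 * (4 * (1 * Real.sqrt s + s * (1 / (2 * Real.sqrt s))))) /
        (4 * (s * Real.sqrt s)) ^ 2) s :=
    (hasDerivAt_const s 1).div hd2 (by positivity)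
  have h := (exp_neg_hasDerivAt s).mul (h1.sub h2)
  refine h.congr_deriv ?_
  simp only [Pi.sub_apply]
  have hu2 : Real.sqrt s ^ 2 = s := Real.sq_sqrt hs.le
  unfold G₃
  generalize Real.sqrt s = u at hu0 hu2 ⊢
  subst hu2
  field_simp
  ring

/-- For every `c`, `q(t) = (c e^{-t}/√t)·Q₁(t)` with `Q₁(t) = 2t I₀(t)` solves the
linearization of the far-field equation (14.2). -/
theorem stmt_11 (c : ℝ) :
    ∀ t > (0 : ℝ),
      deriv^[3] (fun s => c * Real.exp (-s) / Real.sqrt s * (2 * s * I₀ s)) t +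
      deriv^[2] (fun s => c * Real.exp (-s) / Real.sqrt s * (2 * s * I₀ s)) t +
      (-1 / (2 * t) + 3 / (4 * t ^ 2)) *
        deriv (fun s => c * Real.exp (-s) / Real.sqrt s * (2 * s * I₀ s)) t +
      (1 / (2 * t ^ 2) - 3 / (4 * t ^ 3)) *
        (c * Real.exp (-t) / Real.sqrt t * (2 * t * I₀ t)) = 0 := by
  intro t ht
  set f : ℝ → ℝ := fun s => c * Real.exp (-s) / Real.sqrt s * (2 * s * I₀ s) with hf
  have hFf : ∀ s ∈ Ioi (0:ℝ), f s = 2 * c * F₀ s := by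
    intro s hs
    simp only [hf, F₀, I₀, mem_Ioi] at hs ⊢
    have hu0 : 0 < Real.sqrt s := Real.sqrt_pos.mpr hs
    have hu2 : Real.sqrt s ^ 2 = s := Real.sq_sqrt hs.le
    rw [Real.sqrt_mul Real.pi_pos.le, Real.exp_neg]
    generalize Real.sqrt s = u at hu0 hu2 ⊢
    subst hu2
    field_simp [Real.exp_ne_zero]
  have hd1 : ∀ s ∈ Ioi (0:ℝ), deriv f s = 2 * c * G₁ s := by
    intro s hs
    have heq : f =ᶠ[nhds s] (fun x => 2 * c * F₀ x) :=
      Filter.eventually_of_mem (isOpen_Ioi.mem_nhds hs) hFf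
    rw [heq.deriv_eq]
    exact (((hF hs).const_mul (2 * c))).deriv
  have hd2 : ∀ s ∈ Ioi (0:ℝ), deriv (deriv f) s = 2 * c * G₂ s := by
    intro s hs
    have heq : deriv f =ᶠ[nhds s] (fun x => 2 * c * G₁ x) :=
      Filter.eventually_of_mem (isOpen_Ioi.mem_nhds hs) hd1
    rw [heq.deriv_eq]
    exact (((hG₁ hs).const_mul (2 * c))).deriv
  have hd3 : deriv (deriv (deriv f)) t = 2 * c * G₃ t := by
    have heq : deriv (deriv f) =ᶠ[nhds t] (fun x => 2 * c * G₂ x) :=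
      Filter.eventually_of_mem (isOpen_Ioi.mem_nhds ht) hd2
    rw [heq.deriv_eq]
    exact (((hG₂ ht).const_mul (2 * c))).deriv
  have e3 : deriv^[3] f t = 2 * c * G₃ t := hd3
  have e2 : deriv^[2] f t = 2 * c * G₂ t := hd2 t ht
  have e1 : deriv f t = 2 * c * G₁ t := hd1 t ht
  have e0 : f t = 2 * c * F₀ t := hFf t ht
  rw [show (c * Real.exp (-t) / Real.sqrt t * (2 * t * I₀ t)) = f t from rfl] at *
  rw [e3, e2, e1, e0]
  unfold G₃ G₂ G₁ F₀
  have hu0 : 0 < Real.sqrt t := Real.sqrt_pos.mpr ht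
  have hu2 : Real.sqrt t ^ 2 = t := Real.sq_sqrt ht.le
  generalize Real.sqrt t = u at hu0 hu2 ⊢
  subst hu2
  field_simp
  ring
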